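/- Let H be a 3-regular finite simple graph containing a triangle with vertices u, v, w, and let u', v', w' be the neighbors of u, v, w, respectively, outside the triangle. Suppose u', v', w' are pairwise distinct. If H − {u,v,w} admits an injective edge-coloring with 7 colors, then H admits an injective edge-coloring with 7 colors. -/

import Mathlib

open SimpleGraph

/-- Two distinct edges of `G` *conflict* if they are at distance exactly 1 in `G`
(they share no endpoint but some endpoint of one is adjacent to some endpoint of the
other), or they lie in a common triangle of `G`. -/
def EdgeConflict {V : Type*} (G : SimpleGraph V) (e₁ e₂ : Sym2 V) : Prop :=
  e₁ ≠ e₂ ∧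
    (((∀ u ∈ e₁, u ∉ e₂) ∧ ∃ u ∈ e₁, ∃ v ∈ e₂, G.Adj u v) ∨
      (∃ a b c : V, G.Adj a b ∧ G.Adj b c ∧ G.Adj a c ∧
        e₁ ∈ ({s(a, b), s(b, c), s(a, c)} : Set (Sym2 V)) ∧
        e₂ ∈ ({s(a, b), s(b, c), s(a, c)} : Set (Sym2 V))))

/-- An injective edge-coloring of `G` with `k` colors. -/
def IsInjEdgeColoring {V : Type*} (G : SimpleGraph V) {k : ℕ} (f : Sym2 V → Fin k) : Prop :=
  ∀ e₁ ∈ G.edgeSet, ∀ e₂ ∈ G.edgeSet, EdgeConflict G e₁ e₂ → f e₁ ≠ f e₂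

/-- The injective chromatic index of `G`. -/
noncomputable def injChromIndex {V : Type*} (G : SimpleGraph V) : ℕ :=
  sInf {k : ℕ | ∃ f : Sym2 V → Fin k, IsInjEdgeColoring G f}

open Finset

/-! Removing the triangle leaves three triangle edges and three pendant edges to colour. Their
conflicts among themselves are among those of a triangular prism (triangle edges pairwise, pendant
edges pairwise, each triangle edge with the opposite pendant edge): a pendant edge lies in no
triangle, so it conflicts with no edge sharing an endpoint with it. Each new edge conflicts with at
most four old edges, so at least three of the seven colours stay available for it, and the prism
is 3-choosable: colour one vertex with a colour missing from a neighbour's list and the rest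
greedily, ending at that neighbour. -/

section Prism

variable {α : Type*}

lemma exists_mem_ne_ne_of_three_le_card [DecidableEq α] {s : Finset α} (hs : 3 ≤ #s) (x y : α) :
    ∃ z ∈ s, z ≠ x ∧ z ≠ y := by
  obtain ⟨z, hz, hzxy⟩ := exists_mem_notMem_of_card_lt_card
    ((card_le_two (a := x) (b := y)).trans_lt hs)
  simp only [mem_insert, mem_singleton, not_or] at hzxy
  exact ⟨z, hz, hzxy⟩

/-- The triangular prism has triangles `a b c`, `a' b' c'` and the matching `aa'`, `bb'`, `cc'`. -/
def IsPrismColoring (a b c a' b' c' : α) : Prop :=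
  a ≠ b ∧ a ≠ c ∧ b ≠ c ∧ a' ≠ b' ∧ a' ≠ c' ∧ b' ≠ c' ∧ a ≠ a' ∧ b ≠ b' ∧ c ≠ c'

def HasPrismColoringFrom (A B C A' B' C' : Finset α) : Prop :=
  ∃ a ∈ A, ∃ b ∈ B, ∃ c ∈ C, ∃ a' ∈ A', ∃ b' ∈ B', ∃ c' ∈ C', IsPrismColoring a b c a' b' c'

namespace HasPrismColoringFrom

variable {A B C A' B' C' : Finset α}

lemma swap_left (h : HasPrismColoringFrom A B C A' B' C') :
    HasPrismColoringFrom B A C B' A' C' := by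
  obtain ⟨a, ha, b, hb, c, hc, a', ha', b', hb', c', hc', h₁, h₂, h₃, h₄, h₅, h₆, h₇, h₈, h₉⟩ := h
  exact ⟨b, hb, a, ha, c, hc, b', hb', a', ha', c', hc',
    h₁.symm, h₃, h₂, h₄.symm, h₆, h₅, h₈, h₇, h₉⟩

lemma swap_right (h : HasPrismColoringFrom A B C A' B' C') :
    HasPrismColoringFrom A C B A' C' B' := by
  obtain ⟨a, ha, b, hb, c, hc, a', ha', b', hb', c', hc', h₁, h₂, h₃, h₄, h₅, h₆, h₇, h₈, h₉⟩ := h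
  exact ⟨a, ha, c, hc, b, hb, a', ha', c', hc', b', hb',
    h₂, h₁, h₃.symm, h₅, h₄, h₆.symm, h₇, h₉, h₈⟩

lemma flip (h : HasPrismColoringFrom A B C A' B' C') :
    HasPrismColoringFrom A' B' C' A B C := by
  obtain ⟨a, ha, b, hb, c, hc, a', ha', b', hb', c', hc', h₁, h₂, h₃, h₄, h₅, h₆, h₇, h₈, h₉⟩ := h
  exact ⟨a', ha', b', hb', c', hc', a, ha, b, hb, c, hc,
    h₄, h₅, h₆, h₁, h₂, h₃, h₇.symm, h₈.symm, h₉.symm⟩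

lemma of_eq {S : Finset α} (hS : 3 ≤ #S) : HasPrismColoringFrom S S S S S S := by
  obtain ⟨a, ha, b, hb, c, hc, hab, hac, hbc⟩ := two_lt_card.mp hS
  exact ⟨a, ha, b, hb, c, hc, b, hb, c, hc, a, ha,
    hab, hac, hbc, hbc, hab.symm, hac.symm, hab, hbc, hac.symm⟩

variable [DecidableEq α]

/-- Colour `B` with a colour `c` unavailable at `A` and the rest greedily, ending at `A`: there
only two colours are blocked, as the third neighbour `B` of `A` carries `c ∉ A`. -/
lemma of_mem_sdiff_triangle (hA : 3 ≤ #A) (hC : 3 ≤ #C) (hA' : 3 ≤ #A') (hB' : 3 ≤ #B')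
    (hC' : 3 ≤ #C') {c : α} (hc : c ∈ B \ A) : HasPrismColoringFrom A B C A' B' C' := by
  obtain ⟨hcB, hcA⟩ := mem_sdiff.mp hc
  obtain ⟨b', hb', hb'c, -⟩ := exists_mem_ne_ne_of_three_le_card hB' c c
  obtain ⟨a', ha', ha'b', -⟩ := exists_mem_ne_ne_of_three_le_card hA' b' b'
  obtain ⟨c', hc', hc'a', hc'b'⟩ := exists_mem_ne_ne_of_three_le_card hC' a' b'
  obtain ⟨x, hx, hxc, hxc'⟩ := exists_mem_ne_ne_of_three_le_card hC c c'
  obtain ⟨a, ha, hax, haa'⟩ := exists_mem_ne_ne_of_three_le_card hA x a'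
  exact ⟨a, ha, c, hcB, x, hx, a', ha', b', hb', c', hc', ne_of_mem_of_not_mem ha hcA, hax,
    hxc.symm, ha'b', hc'a'.symm, hc'b'.symm, haa', hb'c.symm, hxc'⟩

lemma of_mem_sdiff_matching (hA : 3 ≤ #A) (hB : 3 ≤ #B) (hC : 3 ≤ #C) (hB' : 3 ≤ #B')
    (hC' : 3 ≤ #C') {c : α} (hc : c ∈ A' \ A) : HasPrismColoringFrom A B C A' B' C' := by
  obtain ⟨hcA', hcA⟩ := mem_sdiff.mp hc
  obtain ⟨b', hb', hb'c, -⟩ := exists_mem_ne_ne_of_three_le_card hB' c c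
  obtain ⟨c', hc', hc'c, hc'b'⟩ := exists_mem_ne_ne_of_three_le_card hC' c b'
  obtain ⟨b, hb, hbb', -⟩ := exists_mem_ne_ne_of_three_le_card hB b' b'
  obtain ⟨x, hx, hxb, hxc'⟩ := exists_mem_ne_ne_of_three_le_card hC b c'
  obtain ⟨a, ha, hab, hax⟩ := exists_mem_ne_ne_of_three_le_card hA b x
  exact ⟨a, ha, b, hb, x, hx, c, hcA', b', hb', c', hc', hab, hax, hxb.symm, hb'c.symm,
    hc'c.symm, hc'b'.symm, ne_of_mem_of_not_mem ha hcA, hbb', hxc'⟩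

lemma of_ne_triangle (hA : 3 ≤ #A) (hB : 3 ≤ #B) (hC : 3 ≤ #C) (hA' : 3 ≤ #A')
    (hB' : 3 ≤ #B') (hC' : 3 ≤ #C') (hAB : A ≠ B) : HasPrismColoringFrom A B C A' B' C' := by
  by_cases hBA : B ⊆ A
  · obtain ⟨c, hc⟩ := sdiff_nonempty.mpr fun hAB' => hAB (Subset.antisymm hAB' hBA)
    exact (of_mem_sdiff_triangle hB hC hB' hA' hC' hc).swap_left
  · obtain ⟨c, hc⟩ := sdiff_nonempty.mpr hBA
    exact of_mem_sdiff_triangle hA hC hA' hB' hC' hc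

lemma of_ne_matching (hA : 3 ≤ #A) (hB : 3 ≤ #B) (hC : 3 ≤ #C) (hA' : 3 ≤ #A')
    (hB' : 3 ≤ #B') (hC' : 3 ≤ #C') (hAA' : A ≠ A') : HasPrismColoringFrom A B C A' B' C' := by
  by_cases hA'A : A' ⊆ A
  · obtain ⟨c, hc⟩ := sdiff_nonempty.mpr fun hAA'' => hAA' (Subset.antisymm hAA'' hA'A)
    exact (of_mem_sdiff_matching hA' hB' hC' hB hC hc).flip
  · obtain ⟨c, hc⟩ := sdiff_nonempty.mpr hA'A
    exact of_mem_sdiff_matching hA hB hC hB' hC' hc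

theorem of_three_le_card (hA : 3 ≤ #A) (hB : 3 ≤ #B) (hC : 3 ≤ #C) (hA' : 3 ≤ #A')
    (hB' : 3 ≤ #B') (hC' : 3 ≤ #C') : HasPrismColoringFrom A B C A' B' C' := by
  by_cases hAB : A = B; swap
  · exact of_ne_triangle hA hB hC hA' hB' hC' hAB
  by_cases hAC : A = C; swap
  · exact (of_ne_triangle hA hC hB hA' hC' hB' hAC).swap_right
  by_cases hAA' : A = A'; swap
  · exact of_ne_matching hA hB hC hA' hB' hC' hAA'
  by_cases hA'B' : A' = B'; swap
  · exact (of_ne_triangle hA' hB' hC' hA hB hC hA'B').flip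
  by_cases hA'C' : A' = C'; swap
  · exact (of_ne_triangle hA' hC' hB' hA hC hB hA'C').flip.swap_right
  subst hAB hAC hAA' hA'B' hA'C'
  exact of_eq hA

end HasPrismColoringFrom

end Prism

section Conflict

variable {V : Type*} {G : SimpleGraph V}

lemma Sym2.exists_map_val_eq_iff {S : Set V} {e : Sym2 V} :
    (∃ e' : Sym2 S, e'.map (↑) = e) ↔ ∀ x ∈ e, x ∈ S := by
  refine ⟨?_, fun h => ⟨_, Sym2.attachWith_map_subtypeVal h⟩⟩
  rintro ⟨e', rfl⟩ x hx
  obtain ⟨x, -, rfl⟩ := Sym2.mem_map.mp hx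
  exact x.2

lemma EdgeConflict.symm {e₁ e₂ : Sym2 V} (h : EdgeConflict G e₁ e₂) : EdgeConflict G e₂ e₁ := by
  obtain ⟨hne, ⟨hdisj, x, hx, y, hy, hxy⟩ | ⟨a, b, c, hab, hbc, hac, h₁, h₂⟩⟩ := h
  · exact ⟨hne.symm, .inl ⟨fun z hz₂ hz₁ => hdisj z hz₁ hz₂, y, hy, x, hx, hxy.symm⟩⟩
  · exact ⟨hne.symm, .inr ⟨a, b, c, hab, hbc, hac, h₂, h₁⟩⟩

lemma eq_or_eq_or_eq_of_mem_of_mem_triangle {a b c z : V} {e : Sym2 V}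
    (he : e ∈ ({s(a, b), s(b, c), s(a, c)} : Set (Sym2 V))) (hz : z ∈ e) :
    z = a ∨ z = b ∨ z = c := by
  simp only [Set.mem_insert_iff, Set.mem_singleton_iff] at he
  rcases he with rfl | rfl | rfl <;> simp only [Sym2.mem_iff] at hz <;> tauto

lemma mem_or_mem_of_ne_of_mem_triangle {a b c z : V} {e₁ e₂ : Sym2 V} (hne : e₁ ≠ e₂)
    (h₁ : e₁ ∈ ({s(a, b), s(b, c), s(a, c)} : Set (Sym2 V)))
    (h₂ : e₂ ∈ ({s(a, b), s(b, c), s(a, c)} : Set (Sym2 V))) (hz : z = a ∨ z = b ∨ z = c) :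
    z ∈ e₁ ∨ z ∈ e₂ := by
  simp only [Set.mem_insert_iff, Set.mem_singleton_iff] at h₁ h₂
  rcases h₁ with rfl | rfl | rfl <;> rcases h₂ with rfl | rfl | rfl <;>
    rcases hz with rfl | rfl | rfl <;> simp_all

lemma EdgeConflict.of_map_val {S : Set V} {e₁ e₂ : Sym2 S}
    (h : EdgeConflict G (e₁.map (↑)) (e₂.map (↑))) : EdgeConflict (G.induce S) e₁ e₂ := by
  have hmem {z : S} {e : Sym2 S} : (z : V) ∈ e.map (↑) ↔ z ∈ e := by simp [Sym2.mem_map]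
  obtain ⟨hne, ⟨hdisj, x, hx, y, hy, hxy⟩ | ⟨a, b, c, hab, hbc, hac, h₁, h₂⟩⟩ := h
  · obtain ⟨x, hx', rfl⟩ := Sym2.mem_map.mp hx
    obtain ⟨y, hy', rfl⟩ := Sym2.mem_map.mp hy
    exact ⟨fun h => hne (h ▸ rfl),
      .inl ⟨fun z hz₁ hz₂ => hdisj z (hmem.2 hz₁) (hmem.2 hz₂), x, hx', y, hy', hxy⟩⟩
  have hS {z : V} (hz : z = a ∨ z = b ∨ z = c) : z ∈ S := by
    rcases mem_or_mem_of_ne_of_mem_triangle hne h₁ h₂ hz with h | h <;>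
      obtain ⟨z, -, rfl⟩ := Sym2.mem_map.mp h <;> exact z.2
  let a' : S := ⟨a, hS (.inl rfl)⟩
  let b' : S := ⟨b, hS (.inr (.inl rfl))⟩
  let c' : S := ⟨c, hS (.inr (.inr rfl))⟩
  have hlift {e : Sym2 S} (he : e.map (↑) ∈ ({s(a, b), s(b, c), s(a, c)} : Set (Sym2 V))) :
      e ∈ ({s(a', b'), s(b', c'), s(a', c')} : Set (Sym2 S)) := by
    simp only [Set.mem_insert_iff, Set.mem_singleton_iff] at he ⊢
    have hinj := Sym2.map.injective (Subtype.val_injective (p := (· ∈ S)))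
    exact he.imp (fun h => hinj h) (Or.imp (fun h => hinj h) fun h => hinj h)
  exact ⟨fun h => hne (h ▸ rfl), .inr ⟨a', b', c', hab, hbc, hac, hlift h₁, hlift h₂⟩⟩

variable {K : Set V}

structure EdgeBoundaryIsMatching (G : SimpleGraph V) (K : Set V) : Prop where
  eq_of_adj_of_adj_of_notMem : ∀ ⦃x y z⦄, x ∈ K → y ∈ K → z ∉ K → G.Adj x z → G.Adj y z → x = y
  eq_of_adj_of_adj_of_mem : ∀ ⦃x y z⦄, x ∈ K → y ∉ K → z ∉ K → G.Adj x y → G.Adj x z → y = z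

namespace EdgeBoundaryIsMatching

lemma mem_of_mem_triangle (hK : EdgeBoundaryIsMatching G K) {a b c x y : V} {e₁ e₂ : Sym2 V}
    (hab : G.Adj a b) (hbc : G.Adj b c) (hac : G.Adj a c)
    (he₁ : e₁ ∈ ({s(a, b), s(b, c), s(a, c)} : Set (Sym2 V)))
    (he₂ : e₂ ∈ ({s(a, b), s(b, c), s(a, c)} : Set (Sym2 V)))
    (hx : x ∈ e₁) (hxK : x ∈ K) (hy : y ∈ e₂) : y ∈ K := by
  have hpair {p q r : V} (hpq : G.Adj p q) (hpr : G.Adj p r) (hqr : G.Adj q r) (hp : p ∈ K) :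
      q ∈ K := by
    by_contra hq
    by_cases hr : r ∈ K
    · exact hpr.ne (hK.eq_of_adj_of_adj_of_notMem hp hr hq hpq hqr.symm)
    · exact hqr.ne (hK.eq_of_adj_of_adj_of_mem hp hq hr hpq hpr)
  have hall : a ∈ K ∧ b ∈ K ∧ c ∈ K := by
    rcases eq_or_eq_or_eq_of_mem_of_mem_triangle he₁ hx with rfl | rfl | rfl
    · exact ⟨hxK, hpair hab hac hbc hxK, hpair hac hab hbc.symm hxK⟩
    · exact ⟨hpair hab.symm hbc hac hxK, hxK, hpair hbc hab.symm hac.symm hxK⟩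
    · exact ⟨hpair hac.symm hbc.symm hab hxK, hpair hbc.symm hac.symm hab.symm hxK, hxK⟩
  rcases eq_or_eq_or_eq_of_mem_of_mem_triangle he₂ hy with rfl | rfl | rfl
  exacts [hall.1, hall.2.1, hall.2.2]

lemma not_edgeConflict (hK : EdgeBoundaryIsMatching G K) {x y : V} {e : Sym2 V} (hx : x ∈ K)
    (hy : y ∉ K) (hxe : x ∈ e) : ¬EdgeConflict G e s(x, y) := by
  rintro ⟨-, ⟨hdisj, -⟩ | ⟨a, b, c, hab, hbc, hac, -, he⟩⟩
  · exact hdisj x hxe (Sym2.mem_mk_left x y)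
  · exact hy (hK.mem_of_mem_triangle hab hbc hac he he (Sym2.mem_mk_left x y) hx
      (Sym2.mem_mk_right x y))

end EdgeBoundaryIsMatching

open Classical in
noncomputable def outsideConflicts [Fintype V] (G : SimpleGraph V) (K : Set V) (e : Sym2 V) :
    Finset (Sym2 (Kᶜ : Set V)) :=
  {e' | e'.map (↑) ∈ G.edgeSet ∧ EdgeConflict G e (e'.map (↑))}

open Classical in
noncomputable def outerNeighbors [Fintype V] (G : SimpleGraph V) [DecidableRel G.Adj]
    (K : Set V) (x z : V) : Finset V :=
  {y ∈ G.neighborFinset x | y ∉ K ∧ y ≠ z}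

open Classical in
noncomputable def edgesBeyond [Fintype V] (G : SimpleGraph V) [DecidableRel G.Adj]
    (K : Set V) (x z : V) : Finset (Sym2 V) :=
  (outerNeighbors G K x z).biUnion fun y => (G.incidenceFinset y).erase s(x, y)

lemma card_edgesBeyond_le [Fintype V] [DecidableRel G.Adj] (hdeg : ∀ x, G.degree x ≤ 3)
    (x z : V) : #(edgesBeyond G K x z) ≤ #(outerNeighbors G K x z) * 2 := by
  classical
  refine card_biUnion_le_card_mul _ _ _ fun y hy => ?_
  have hxy : G.Adj x y := (mem_neighborFinset _ _ _).mp (mem_filter.mp hy).1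
  have hmem : s(x, y) ∈ G.incidenceFinset y :=
    (mem_incidenceFinset _ _ _).mpr ⟨hxy, Sym2.mem_mk_right x y⟩
  have := hdeg y
  rw [card_erase_of_mem hmem, card_incidenceFinset_eq_degree]
  omega

namespace EdgeBoundaryIsMatching

variable [Fintype V] [DecidableRel G.Adj]

open Classical in
lemma image_outsideConflicts_subset (hK : EdgeBoundaryIsMatching G K) {a b : V} (ha : a ∈ K) :
    (outsideConflicts G K s(a, b)).image (Sym2.map (↑)) ⊆
      edgesBeyond G K a b ∪ edgesBeyond G K b a := by
  simp only [subset_iff, mem_image, outsideConflicts, mem_filter, mem_univ, true_and]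
  rintro _ ⟨e, ⟨he, hconf⟩, rfl⟩
  have hout : ∀ z ∈ e.map Subtype.val, z ∉ K := Sym2.exists_map_val_eq_iff.mp ⟨e, rfl⟩
  generalize e.map Subtype.val = e at he hconf hout
  obtain ⟨-, ⟨hdisj, x, hx, y, hy, hxy⟩ | ⟨p, q, r, hpq, hqr, hpr, hab, he'⟩⟩ := hconf
  · have key {x z : V} (hxz : s(a, b) = s(x, z)) (hxy : G.Adj x y) :
        e ∈ edgesBeyond G K x z := by
      rw [hxz] at hdisj
      refine mem_biUnion.mpr ⟨y, mem_filter.mpr ⟨(mem_neighborFinset _ _ _).mpr hxy,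
        hout y hy, ?_⟩, mem_erase.mpr ⟨?_, (mem_incidenceFinset _ _ _).mpr ⟨he, hy⟩⟩⟩
      · rintro rfl
        exact hdisj y (Sym2.mem_mk_right x y) hy
      · rintro rfl
        exact hdisj x (Sym2.mem_mk_left x z) (Sym2.mem_mk_left x y)
    rcases Sym2.mem_iff.mp hx with rfl | rfl
    exacts [mem_union_left _ (key rfl hxy), mem_union_right _ (key Sym2.eq_swap hxy)]
  · exact (hout _ e.out_fst_mem (hK.mem_of_mem_triangle hpq hqr hpr hab he'
      (Sym2.mem_mk_left a b) ha e.out_fst_mem)).elim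

/-- If `b ∈ K`, both `a` and `b` have at most one neighbour outside `K`; otherwise `b` is the only
one of `a`, and `b` has at most two neighbours besides `a`. -/
lemma card_outerNeighbors_add_le (hK : EdgeBoundaryIsMatching G K) (hdeg : ∀ x, G.degree x ≤ 3)
    {a b : V} (hab : G.Adj a b) (ha : a ∈ K) :
    #(outerNeighbors G K a b) + #(outerNeighbors G K b a) ≤ 2 := by
  classical
  have hle_one {x : V} (hx : x ∈ K) (z : V) : #(outerNeighbors G K x z) ≤ 1 :=
    card_le_one.mpr fun y₁ h₁ y₂ h₂ => by
      simp only [outerNeighbors, mem_filter, mem_neighborFinset] at h₁ h₂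
      exact hK.eq_of_adj_of_adj_of_mem hx h₁.2.1 h₂.2.1 h₁.1 h₂.1
  by_cases hb : b ∈ K
  · have := hle_one ha b
    have := hle_one hb a
    omega
  have hab_empty : outerNeighbors G K a b = ∅ :=
    filter_eq_empty_iff.mpr fun y hy ⟨hyK, hyb⟩ =>
      hyb (hK.eq_of_adj_of_adj_of_mem ha hyK hb ((mem_neighborFinset _ _ _).mp hy) hab)
  have hba : outerNeighbors G K b a ⊆ (G.neighborFinset b).erase a := fun y hy => by
    simp only [outerNeighbors, mem_filter] at hy
    exact mem_erase.mpr ⟨hy.2.2, hy.1⟩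
  have hba_card := card_le_card hba
  rw [card_erase_of_mem ((mem_neighborFinset _ _ _).mpr hab.symm),
    card_neighborFinset_eq_degree] at hba_card
  have := hdeg b
  rw [hab_empty, card_empty]
  omega

theorem card_outsideConflicts_le (hK : EdgeBoundaryIsMatching G K) (hdeg : ∀ x, G.degree x ≤ 3)
    {a b : V} (hab : G.Adj a b) (ha : a ∈ K) : #(outsideConflicts G K s(a, b)) ≤ 4 := by
  classical
  rw [← card_image_of_injective _ (Sym2.map.injective Subtype.val_injective)]
  have := (card_le_card (hK.image_outsideConflicts_subset (b := b) ha)).trans (card_union_le _ _)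
  have := card_edgesBeyond_le (K := K) hdeg a b
  have := card_edgesBeyond_le (K := K) hdeg b a
  have := hK.card_outerNeighbors_add_le hdeg hab ha
  omega

end EdgeBoundaryIsMatching

theorem IsInjEdgeColoring.of_induce_compl {k : ℕ} {g : Sym2 V → Fin k}
    (hold : IsInjEdgeColoring (G.induce Kᶜ) (g ∘ Sym2.map (↑)))
    (hnew : ∀ e₁ ∈ G.edgeSet, (∃ x ∈ e₁, x ∈ K) → ∀ e₂ ∈ G.edgeSet, EdgeConflict G e₁ e₂ →
      g e₁ ≠ g e₂) :
    IsInjEdgeColoring G g := by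
  intro e₁ he₁ e₂ he₂ h
  by_cases hK₁ : ∃ x ∈ e₁, x ∈ K
  · exact hnew e₁ he₁ hK₁ e₂ he₂ h
  by_cases hK₂ : ∃ x ∈ e₂, x ∈ K
  · exact (hnew e₂ he₂ hK₂ e₁ he₁ h.symm).symm
  simp only [not_exists, not_and] at hK₁ hK₂
  obtain ⟨e₁, rfl⟩ := Sym2.exists_map_val_eq_iff (S := Kᶜ).mpr hK₁
  obtain ⟨e₂, rfl⟩ := Sym2.exists_map_val_eq_iff (S := Kᶜ).mpr hK₂
  exact hold _ ((Embedding.induce Kᶜ).map_mem_edgeSet_iff.mp he₁) _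
    ((Embedding.induce Kᶜ).map_mem_edgeSet_iff.mp he₂) h.of_map_val

theorem IsInjEdgeColoring.exists_of_induce_compl {k : ℕ} {f : Sym2 (Kᶜ : Set V) → Fin k} (hf : IsInjEdgeColoring (G.induce Kᶜ) f) {c : Sym2 V → Fin k}
    (hnew : ∀ e₁ ∈ G.edgeSet, (∃ x ∈ e₁, x ∈ K) → ∀ e₂ ∈ G.edgeSet, (∃ x ∈ e₂, x ∈ K) →
      EdgeConflict G e₁ e₂ → c e₁ ≠ c e₂)
    (hold : ∀ e₁ ∈ G.edgeSet, (∃ x ∈ e₁, x ∈ K) → ∀ e₂ : Sym2 (Kᶜ : Set V),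
      e₂.map (↑) ∈ G.edgeSet → EdgeConflict G e₁ (e₂.map (↑)) → c e₁ ≠ f e₂) :
    ∃ g : Sym2 V → Fin k, IsInjEdgeColoring G g := by
  classical
  have hinj : Function.Injective (Sym2.map ((↑) : (Kᶜ : Set V) → V)) :=
    Sym2.map.injective Subtype.val_injective
  refine ⟨fun e => if ∃ x ∈ e, x ∈ K then c e else Function.extend (Sym2.map (↑)) f c e,
    .of_induce_compl (K := K) ?_ ?_⟩
  · convert hf using 1
    funext e
    have hK : ¬∃ x ∈ e.map (↑), x ∈ K := fun ⟨x, hx, hxK⟩ =>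
      Sym2.exists_map_val_eq_iff.mp ⟨e, rfl⟩ x hx hxK
    simp only [Function.comp_apply, if_neg hK, hinj.extend_apply]
  · intro e₁ he₁ hK₁ e₂ he₂ hconf
    rw [if_pos hK₁]
    split_ifs with hK₂
    · exact hnew e₁ he₁ hK₁ e₂ he₂ hK₂ hconf
    · simp only [not_exists, not_and] at hK₂
      obtain ⟨e₂, rfl⟩ := Sym2.exists_map_val_eq_iff (S := Kᶜ).mpr hK₂
      rw [hinj.extend_apply]
      exact hold e₁ he₁ hK₁ e₂ he₂ hconf

end Conflict

section PendantTriangle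

variable {V : Type*} {G : SimpleGraph V} {u v w u' v' w' : V}

lemma SimpleGraph.adj_iff_of_degree_le_three [Fintype V] [DecidableRel G.Adj] {x a b c : V}
    (hx : G.degree x ≤ 3) (ha : G.Adj x a) (hb : G.Adj x b) (hc : G.Adj x c) (hab : a ≠ b)
    (hac : a ≠ c) (hbc : b ≠ c) (z : V) : G.Adj x z ↔ z = a ∨ z = b ∨ z = c := by
  classical
  have hsub : ({a, b, c} : Finset V) ⊆ G.neighborFinset x := by
    simp [insert_subset_iff, ha, hb, hc]
  have heq := eq_of_subset_of_card_le hsub (by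
    rw [card_neighborFinset_eq_degree, card_eq_three.mpr ⟨a, b, c, hab, hac, hbc, rfl⟩]
    exact hx)
  rw [← mem_neighborFinset, ← heq]
  simp

structure IsPendantTriangle (G : SimpleGraph V) (u v w u' v' w' : V) : Prop where
  adj_u : ∀ z, G.Adj u z ↔ z = v ∨ z = w ∨ z = u'
  adj_v : ∀ z, G.Adj v z ↔ z = u ∨ z = w ∨ z = v'
  adj_w : ∀ z, G.Adj w z ↔ z = u ∨ z = v ∨ z = w'
  u'_notMem : u' ∉ ({u, v, w} : Set V)
  v'_notMem : v' ∉ ({u, v, w} : Set V)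
  w'_notMem : w' ∉ ({u, v, w} : Set V)
  pendant_ne : u' ≠ v' ∧ u' ≠ w' ∧ v' ≠ w'

namespace IsPendantTriangle

lemma of_degree_le_three [Fintype V] [DecidableRel G.Adj] (hu : G.degree u ≤ 3)
    (hv : G.degree v ≤ 3) (hw : G.degree w ≤ 3) (huv : G.Adj u v) (hvw : G.Adj v w)
    (huw : G.Adj u w) (huu' : G.Adj u u') (hu'K : u' ∉ ({u, v, w} : Set V)) (hvv' : G.Adj v v')
    (hv'K : v' ∉ ({u, v, w} : Set V)) (hww' : G.Adj w w') (hw'K : w' ∉ ({u, v, w} : Set V))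
    (hne : u' ≠ v' ∧ u' ≠ w' ∧ v' ≠ w') : IsPendantTriangle G u v w u' v' w' := by
  obtain ⟨-, hu'v, hu'w⟩ : u' ≠ u ∧ u' ≠ v ∧ u' ≠ w := by simpa using hu'K
  obtain ⟨hv'u, -, hv'w⟩ : v' ≠ u ∧ v' ≠ v ∧ v' ≠ w := by simpa using hv'K
  obtain ⟨hw'u, hw'v, -⟩ : w' ≠ u ∧ w' ≠ v ∧ w' ≠ w := by simpa using hw'K
  exact ⟨G.adj_iff_of_degree_le_three hu huv huw huu' hvw.ne hu'v.symm hu'w.symm,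
    G.adj_iff_of_degree_le_three hv huv.symm hvw hvv' huw.ne hv'u.symm hv'w.symm,
    G.adj_iff_of_degree_le_three hw huw.symm hvw.symm hww' huv.ne hw'u.symm hw'v.symm,
    hu'K, hv'K, hw'K, hne⟩

lemma eq_of_adj_of_notMem (h : IsPendantTriangle G u v w u' v' w') {x z : V}
    (hx : x ∈ ({u, v, w} : Set V)) (hz : z ∉ ({u, v, w} : Set V)) (hxz : G.Adj x z) :
    x = u ∧ z = u' ∨ x = v ∧ z = v' ∨ x = w ∧ z = w' := by
  simp only [Set.mem_insert_iff, Set.mem_singleton_iff, not_or] at hx hz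
  rcases hx with rfl | rfl | rfl
  · rcases (h.adj_u z).1 hxz with rfl | rfl | rfl <;> simp_all
  · rcases (h.adj_v z).1 hxz with rfl | rfl | rfl <;> simp_all
  · rcases (h.adj_w z).1 hxz with rfl | rfl | rfl <;> simp_all

lemma edgeBoundaryIsMatching (h : IsPendantTriangle G u v w u' v' w') :
    EdgeBoundaryIsMatching G {u, v, w} where
  eq_of_adj_of_adj_of_notMem x y z hx hy hz hxz hyz := by
    have := h.pendant_ne
    rcases h.eq_of_adj_of_notMem hx hz hxz with ⟨rfl, rfl⟩ | ⟨rfl, rfl⟩ | ⟨rfl, rfl⟩ <;>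
      rcases h.eq_of_adj_of_notMem hy hz hyz with ⟨rfl, h⟩ | ⟨rfl, h⟩ | ⟨rfl, h⟩ <;> simp_all
  eq_of_adj_of_adj_of_mem x y z hx hy hz hxy hxz := by
    have huv := ((h.adj_u v).2 (.inl rfl)).ne
    have huw := ((h.adj_u w).2 (.inr (.inl rfl))).ne
    have hvw := ((h.adj_v w).2 (.inr (.inl rfl))).ne
    rcases h.eq_of_adj_of_notMem hx hy hxy with ⟨rfl, rfl⟩ | ⟨rfl, rfl⟩ | ⟨rfl, rfl⟩ <;>
      rcases h.eq_of_adj_of_notMem hx hz hxz with ⟨h₁, rfl⟩ | ⟨h₁, rfl⟩ | ⟨h₁, rfl⟩ <;>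
      simp_all

lemma edge_cases (h : IsPendantTriangle G u v w u' v' w') {e : Sym2 V} (he : e ∈ G.edgeSet)
    {x : V} (hx : x ∈ e) (hxK : x ∈ ({u, v, w} : Set V)) :
    e = s(v, w) ∨ e = s(u, w) ∨ e = s(u, v) ∨ e = s(u, u') ∨ e = s(v, v') ∨ e = s(w, w') := by
  obtain ⟨y, rfl⟩ := Sym2.mem_iff_exists.mp hx
  simp only [Set.mem_insert_iff, Set.mem_singleton_iff] at hxK
  rw [mem_edgeSet] at he
  rcases hxK with rfl | rfl | rfl
  · rcases (h.adj_u y).1 he with rfl | rfl | rfl <;> simp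
  · rcases (h.adj_v y).1 he with rfl | rfl | rfl <;> simp
  · rcases (h.adj_w y).1 he with rfl | rfl | rfl <;> simp

lemma ne_of_edgeConflict (h : IsPendantTriangle G u v w u' v' w') {α : Type*}
    {col : Sym2 V → α} (hcol : IsPrismColoring (col s(v, w)) (col s(u, w)) (col s(u, v))
      (col s(u, u')) (col s(v, v')) (col s(w, w')))
    {e₁ e₂ : Sym2 V} (he₁ : e₁ ∈ G.edgeSet) (hK₁ : ∃ x ∈ e₁, x ∈ ({u, v, w} : Set V))
    (he₂ : e₂ ∈ G.edgeSet) (hK₂ : ∃ x ∈ e₂, x ∈ ({u, v, w} : Set V))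
    (hconf : EdgeConflict G e₁ e₂) : col e₁ ≠ col e₂ := by
  obtain ⟨x₁, hx₁, hx₁K⟩ := hK₁
  obtain ⟨x₂, hx₂, hx₂K⟩ := hK₂
  have hK := h.edgeBoundaryIsMatching
  have hu'K := h.u'_notMem
  have hv'K := h.v'_notMem
  have hw'K := h.w'_notMem
  obtain ⟨h₁, h₂, h₃, h₄, h₅, h₆, h₇, h₈, h₉⟩ := hcol
  rcases h.edge_cases he₁ hx₁ hx₁K with rfl | rfl | rfl | rfl | rfl | rfl <;>
  rcases h.edge_cases he₂ hx₂ hx₂K with rfl | rfl | rfl | rfl | rfl | rfl <;>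
  first
    | assumption
    | exact Ne.symm ‹_›
    | exact absurd rfl hconf.1
    | exact absurd hconf (hK.not_edgeConflict (by simp) ‹_› (by simp))
    | exact absurd hconf.symm (hK.not_edgeConflict (by simp) ‹_› (by simp))

theorem exists_coloring_of_three_le_card (h : IsPendantTriangle G u v w u' v' w') {α : Type*}
    [DecidableEq α] (L : Sym2 V → Finset α)
    (hL : ∀ e ∈ G.edgeSet, (∃ x ∈ e, x ∈ ({u, v, w} : Set V)) → 3 ≤ #(L e)) :
    ∃ c : Sym2 V → α, ∀ e₁ ∈ G.edgeSet, (∃ x ∈ e₁, x ∈ ({u, v, w} : Set V)) → c e₁ ∈ L e₁ ∧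
      ∀ e₂ ∈ G.edgeSet, (∃ x ∈ e₂, x ∈ ({u, v, w} : Set V)) → EdgeConflict G e₁ e₂ →
        c e₁ ≠ c e₂ := by
  classical
  have huv := (h.adj_u v).2 (.inl rfl)
  have huw := (h.adj_u w).2 (.inr (.inl rfl))
  have hvw := (h.adj_v w).2 (.inr (.inl rfl))
  have huu' := (h.adj_u u').2 (.inr (.inr rfl))
  have hvv' := (h.adj_v v').2 (.inr (.inr rfl))
  have hww' := (h.adj_w w').2 (.inr (.inr rfl))
  have hL' {x y : V} (hxy : G.Adj x y) (hx : x ∈ ({u, v, w} : Set V)) : 3 ≤ #(L s(x, y)) :=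
    hL _ hxy ⟨x, Sym2.mem_mk_left x y, hx⟩
  obtain ⟨a, ha, b, hb, c, hc, a', ha', b', hb', c', hc', hp⟩ :=
    HasPrismColoringFrom.of_three_le_card (hL' hvw (by simp)) (hL' huw (by simp))
      (hL' huv (by simp)) (hL' huu' (by simp)) (hL' hvv' (by simp)) (hL' hww' (by simp))
  obtain ⟨hu'u, hu'v, hu'w⟩ : u' ≠ u ∧ u' ≠ v ∧ u' ≠ w := by simpa using h.u'_notMem
  obtain ⟨hv'u, hv'v, hv'w⟩ : v' ≠ u ∧ v' ≠ v ∧ v' ≠ w := by simpa using h.v'_notMem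
  obtain ⟨hw'u, hw'v, hw'w⟩ : w' ≠ u ∧ w' ≠ v ∧ w' ≠ w := by simpa using h.w'_notMem
  let col : Sym2 V → α := fun e =>
    if e = s(v, w) then a else if e = s(u, w) then b else if e = s(u, v) then c
    else if e = s(u, u') then a' else if e = s(v, v') then b' else c'
  have hcol_vw : col s(v, w) = a := if_pos rfl
  have hcol_uw : col s(u, w) = b := by simp [col, huv.ne, huw.ne]
  have hcol_uv : col s(u, v) = c := by simp [col, huv.ne, huw.ne, hvw.ne, huv.ne']
  have hcol_uu' : col s(u, u') = a' := by simp [col, huv.ne, huw.ne, hu'u, hu'v, hu'w]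
  have hcol_vv' : col s(v, v') = b' := by simp [col, hvw.ne, huv.ne', hv'u, hv'v, hv'w]
  have hcol_ww' : col s(w, w') = c' := by simp [col, huw.ne', hvw.ne', hw'u, hw'v, hw'w]
  have hcol : IsPrismColoring (col s(v, w)) (col s(u, w)) (col s(u, v)) (col s(u, u'))
      (col s(v, v')) (col s(w, w')) := by
    rwa [hcol_vw, hcol_uw, hcol_uv, hcol_uu', hcol_vv', hcol_ww']
  refine ⟨col, fun e₁ he₁ hK₁ => ⟨?_, fun e₂ he₂ hK₂ => h.ne_of_edgeConflict hcol he₁ hK₁ he₂ hK₂⟩⟩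
  obtain ⟨x₁, hx₁, hx₁K⟩ := hK₁
  rcases h.edge_cases he₁ hx₁ hx₁K with rfl | rfl | rfl | rfl | rfl | rfl <;>
    simpa only [hcol_vw, hcol_uw, hcol_uv, hcol_uu', hcol_vv', hcol_ww']

end IsPendantTriangle

end PendantTriangle

/-- Deleting a triangle from a 3-regular graph: if the outside-neighbors `u', v', w'`
of the triangle `u v w` are pairwise distinct and `H - {u,v,w}` has an injective
edge-coloring with 7 colors, then so does `H`. -/
theorem extend_coloring_triangle {V : Type*} [Fintype V] (H : SimpleGraph V)
    [DecidableRel H.Adj] (hreg : ∀ x : V, H.degree x = 3)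
    (u v w u' v' w' : V)
    (huv : H.Adj u v) (hvw : H.Adj v w) (huw : H.Adj u w)
    (hu' : H.Adj u u') (hu'out : u' ∉ ({u, v, w} : Set V))
    (hv' : H.Adj v v') (hv'out : v' ∉ ({u, v, w} : Set V))
    (hw' : H.Adj w w') (hw'out : w' ∉ ({u, v, w} : Set V))
    (hdist : u' ≠ v' ∧ u' ≠ w' ∧ v' ≠ w')
    (hcol : ∃ f : Sym2 (({u, v, w}ᶜ : Set V)) → Fin 7,
      IsInjEdgeColoring (H.induce ({u, v, w}ᶜ : Set V)) f) :
    ∃ f : Sym2 V → Fin 7, IsInjEdgeColoring H f := by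
  obtain ⟨f, hf⟩ := hcol
  have hdeg (x : V) : H.degree x ≤ 3 := (hreg x).le
  have h := IsPendantTriangle.of_degree_le_three (hdeg u) (hdeg v) (hdeg w) huv hvw huw hu'
    hu'out hv' hv'out hw' hw'out hdist
  have hL (e : Sym2 V) (he : e ∈ H.edgeSet) (hK : ∃ x ∈ e, x ∈ ({u, v, w} : Set V)) :
      3 ≤ #(univ \ (outsideConflicts H {u, v, w} e).image f) := by
    obtain ⟨x, hx, hxK⟩ := hK
    obtain ⟨y, rfl⟩ := Sym2.mem_iff_exists.mp hx
    rw [mem_edgeSet] at he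
    have := (card_image_le (f := f)).trans
      (h.edgeBoundaryIsMatching.card_outsideConflicts_le hdeg he hxK)
    rw [card_univ_sdiff, Fintype.card_fin]
    omega
  obtain ⟨c, hc⟩ := h.exists_coloring_of_three_le_card _ hL
  refine hf.exists_of_induce_compl (fun e₁ he₁ hK₁ => (hc e₁ he₁ hK₁).2)
    fun e₁ he₁ hK₁ e₂ he₂ hconf hceq => (mem_sdiff.mp (hc e₁ he₁ hK₁).1).2 ?_
  exact mem_image.mpr ⟨e₂, by simp [outsideConflicts, he₂, hconf], hceq.symm⟩
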